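/- arXiv:1407.0341 — 2 statements merged into one kernel-verified Lean document; each statement's English description precedes it below -/
import Mathlib

section
/- Let K be a field of characteristic zero, L a Lie algebra over K, and x, y : ℕ → L two families such that ⁅x(a), x(b)⁆ = 0 for all a, b ∈ ℕ and ⁅y(s+1), x(r)⁆ = ⁅y(s), x(r+3)⁆ for all s, r ∈ ℕ. Then the following two conditions are equivalent: (A) for all s, r₁, r₂ ∈ ℕ, 2⁅⁅y(s), x(r₁+2)⁆, x(r₂)⁆ + ⁅⁅y(s), x(r₁+1)⁆, x(r₂+1)⁆ + 2⁅⁅y(s), x(r₂+2)⁆, x(r₁)⁆ + ⁅⁅y(s), x(r₂+1)⁆, x(r₁+1)⁆ = 0; (B) for all s, r₁, r₂ ∈ ℕ, ⁅⁅y(s), x(r₁+2)⁆, x(r₂)⁆ + ⁅⁅y(s), x(r₁+1)⁆, x(r₂+1)⁆ + ⁅⁅y(s), x(r₁)⁆, x(r₂+2)⁆ = 0. -/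
/-! Since the `x r` commute, the Jacobi identity makes `⁅⁅y s, x a⁆, x b⁆` symmetric in `a` and `b`;
with this symmetry the left side of (A) is twice that of (B), and in characteristic zero
`2 • v = 0` forces `v = 0`. -/

theorem lie_lie_swap_of_lie_eq_zero {L : Type*} [LieRing L] {a b : L} (h : ⁅a, b⁆ = 0) (c : L) :
    ⁅⁅c, a⁆, b⁆ = ⁅⁅c, b⁆, a⁆ := by
  rw [lie_lie, h, lie_zero, zero_sub, ← lie_skew, neg_neg]

theorem stmt_9_general (K : Type*) [Field K] [CharZero K]
    (L : Type*) [LieRing L] [LieAlgebra K L]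
    (x y : ℕ → L)
    (ha : ∀ a b : ℕ, ⁅x a, x b⁆ = 0) :
    (∀ s r₁ r₂ : ℕ,
      2 • ⁅⁅y s, x (r₁ + 2)⁆, x r₂⁆ + ⁅⁅y s, x (r₁ + 1)⁆, x (r₂ + 1)⁆ +
      2 • ⁅⁅y s, x (r₂ + 2)⁆, x r₁⁆ + ⁅⁅y s, x (r₂ + 1)⁆, x (r₁ + 1)⁆ = 0) ↔
    (∀ s r₁ r₂ : ℕ,
      ⁅⁅y s, x (r₁ + 2)⁆, x r₂⁆ + ⁅⁅y s, x (r₁ + 1)⁆, x (r₂ + 1)⁆ +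
      ⁅⁅y s, x r₁⁆, x (r₂ + 2)⁆ = 0) := by
  have hswap (s a b : ℕ) : ⁅⁅y s, x a⁆, x b⁆ = ⁅⁅y s, x b⁆, x a⁆ :=
    lie_lie_swap_of_lie_eq_zero (ha a b) (y s)
  have hA_eq_two_smul (s r₁ r₂ : ℕ) :
      2 • ⁅⁅y s, x (r₁ + 2)⁆, x r₂⁆ + ⁅⁅y s, x (r₁ + 1)⁆, x (r₂ + 1)⁆ +
        2 • ⁅⁅y s, x (r₂ + 2)⁆, x r₁⁆ + ⁅⁅y s, x (r₂ + 1)⁆, x (r₁ + 1)⁆ =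
      2 • (⁅⁅y s, x (r₁ + 2)⁆, x r₂⁆ + ⁅⁅y s, x (r₁ + 1)⁆, x (r₂ + 1)⁆ +
        ⁅⁅y s, x r₁⁆, x (r₂ + 2)⁆) := by
    rw [hswap s (r₂ + 2) r₁, hswap s (r₂ + 1) (r₁ + 1)]
    abel
  have := IsAddTorsionFree.of_isTorsionFree K L
  simp only [hA_eq_two_smul, smul_eq_zero, two_ne_zero, false_or]

/-- Lemma 7.17 (case `k = 3`, `a_{ij} = −3`, rescaled): under relations (x_{1,2}) and (x_d),
relation (t3) is equivalent to relation (t̃3). -/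
theorem stmt_9 (K : Type*) [Field K] [CharZero K]
    (L : Type*) [LieRing L] [LieAlgebra K L]
    (x y : ℕ → L)
    (ha : ∀ a b : ℕ, ⁅x a, x b⁆ = 0)
    (hb : ∀ s r : ℕ, ⁅y (s + 1), x r⁆ = ⁅y s, x (r + 3)⁆) :
    (∀ s r₁ r₂ : ℕ,
      2 • ⁅⁅y s, x (r₁ + 2)⁆, x r₂⁆ + ⁅⁅y s, x (r₁ + 1)⁆, x (r₂ + 1)⁆ +
      2 • ⁅⁅y s, x (r₂ + 2)⁆, x r₁⁆ + ⁅⁅y s, x (r₂ + 1)⁆, x (r₁ + 1)⁆ = 0) ↔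
    (∀ s r₁ r₂ : ℕ,
      ⁅⁅y s, x (r₁ + 2)⁆, x r₂⁆ + ⁅⁅y s, x (r₁ + 1)⁆, x (r₂ + 1)⁆ +
      ⁅⁅y s, x r₁⁆, x (r₂ + 2)⁆ = 0) :=
  stmt_9_general K L x y ha
end

section
/- Let K be a field of characteristic zero, L a Lie algebra over K, and x, y : ℕ → L two families such that ⁅x(a), x(b)⁆ = 0 for all a, b ∈ ℕ and ⁅y(s+1), x(r)⁆ = ⁅y(s), x(r+3)⁆ for all s, r ∈ ℕ, and assume that for all s ∈ ℕ: ⁅⁅y(s), x(1)⁆, x(1)⁆ = −2⁅⁅y(s), x(2)⁆, x(0)⁆, 2⁅⁅y(s), x(2)⁆, x(1)⁆ = −⁅⁅y(s+1), x(0)⁆, x(0)⁆, and ⁅⁅y(s), x(2)⁆, x(2)⁆ = −2⁅⁅y(s+1), x(1)⁆, x(0)⁆. Then for every s ≥ 1 one has ⁅⁅⁅y(s), x(1)⁆, x(0)⁆, x(0)⁆ = 0 and ⁅⁅⁅y(s), x(2)⁆, x(0)⁆, x(0)⁆ = 0. -/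
/-!
Write `T a b c` for `⁅⁅⁅y s, x a⁆, x b⁆, x c⁆`. Since the `x r` commute, `T` is symmetric in its
last two arguments, and (x_d) lets three units of the index of `x` be traded for one unit of the
index of `y`. Bracketing (t₃'), (t₃''), (t₃''') once more with a suitable `x r` and rewriting
everything in terms of `A = T 4 0 0` (resp. `B = T 5 0 0`) gives `8 • A = -A` (resp. `8 • B = -B`),
so `A = B = 0` in characteristic zero. For `s ≥ 1`, (x_d) turns the two claimed brackets
into `A` and `B` for `s - 1`.
-/

theorem eq_zero_of_nsmul_eq_neg {M : Type*} [AddCommGroup M] [IsAddTorsionFree M] {n : ℕ}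
    {a : M} (h : n • a = -a) : a = 0 :=
  (nsmul_eq_zero_iff_right n.succ_ne_zero).mp (by rw [succ_nsmul, h, neg_add_cancel])

theorem lie_lie_comm_of_lie_eq_zero {L : Type*} [LieRing L] {a b : L} (h : ⁅a, b⁆ = 0) (z : L) :
    ⁅⁅z, a⁆, b⁆ = ⁅⁅z, b⁆, a⁆ := by
  have := leibniz_lie z a b
  rw [h, lie_zero, ← lie_skew a ⁅z, b⁆] at this
  exact add_neg_eq_zero.mp this.symm

section

variable {L : Type*} [LieRing L] {x y : ℕ → L}

theorem eight_nsmul_lie_x4_x0_x0_eq_neg (ha : ∀ a b : ℕ, ⁅x a, x b⁆ = 0)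
    (hb : ∀ s r : ℕ, ⁅y (s + 1), x r⁆ = ⁅y s, x (r + 3)⁆)
    (ht3' : ∀ s : ℕ, ⁅⁅y s, x 1⁆, x 1⁆ = -(2 • ⁅⁅y s, x 2⁆, x 0⁆))
    (ht3'' : ∀ s : ℕ, 2 • ⁅⁅y s, x 2⁆, x 1⁆ = -⁅⁅y (s + 1), x 0⁆, x 0⁆)
    (ht3''' : ∀ s : ℕ, ⁅⁅y s, x 2⁆, x 2⁆ = -(2 • ⁅⁅y (s + 1), x 1⁆, x 0⁆)) (s : ℕ) :
    8 • ⁅⁅⁅y s, x 4⁆, x 0⁆, x 0⁆ = -⁅⁅⁅y s, x 4⁆, x 0⁆, x 0⁆ := by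
  have comm (z : L) (a b : ℕ) := lie_lie_comm_of_lie_eq_zero (ha a b) z
  set A := ⁅⁅⁅y s, x 4⁆, x 0⁆, x 0⁆
  have h310 : ⁅⁅⁅y s, x 3⁆, x 1⁆, x 0⁆ = A := by
    rw [← hb s 0, comm (y (s + 1)) 0 1, hb s 1]
  have h211 : 2 • ⁅⁅⁅y s, x 2⁆, x 1⁆, x 1⁆ = -A := by
    rw [← nsmul_lie, ht3'' s, neg_lie, hb s 0, comm _ 0 1, h310]
  have h220 : ⁅⁅⁅y s, x 2⁆, x 2⁆, x 0⁆ = -(2 • A) := by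
    rw [ht3''' s, neg_lie, nsmul_lie, hb s 1]
  have h112 : ⁅⁅⁅y s, x 1⁆, x 1⁆, x 2⁆ = 4 • A := by
    rw [ht3' s, neg_lie, nsmul_lie, comm _ 0 2, h220, smul_neg, smul_smul, neg_neg]
    norm_num
  calc 8 • A = 2 • ⁅⁅⁅y s, x 1⁆, x 1⁆, x 2⁆ := by rw [h112, smul_smul]; norm_num
    _ = 2 • ⁅⁅⁅y s, x 2⁆, x 1⁆, x 1⁆ := by rw [comm _ 1 2, comm (y s) 1 2]
    _ = -A := h211

theorem eight_nsmul_lie_x5_x0_x0_eq_neg (ha : ∀ a b : ℕ, ⁅x a, x b⁆ = 0)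
    (hb : ∀ s r : ℕ, ⁅y (s + 1), x r⁆ = ⁅y s, x (r + 3)⁆)
    (ht3' : ∀ s : ℕ, ⁅⁅y s, x 1⁆, x 1⁆ = -(2 • ⁅⁅y s, x 2⁆, x 0⁆))
    (ht3'' : ∀ s : ℕ, 2 • ⁅⁅y s, x 2⁆, x 1⁆ = -⁅⁅y (s + 1), x 0⁆, x 0⁆)
    (ht3''' : ∀ s : ℕ, ⁅⁅y s, x 2⁆, x 2⁆ = -(2 • ⁅⁅y (s + 1), x 1⁆, x 0⁆)) (s : ℕ) :
    8 • ⁅⁅⁅y s, x 5⁆, x 0⁆, x 0⁆ = -⁅⁅⁅y s, x 5⁆, x 0⁆, x 0⁆ := by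
  have comm (z : L) (a b : ℕ) := lie_lie_comm_of_lie_eq_zero (ha a b) z
  set B := ⁅⁅⁅y s, x 5⁆, x 0⁆, x 0⁆
  have h320 : ⁅⁅⁅y s, x 3⁆, x 2⁆, x 0⁆ = B := by
    rw [← hb s 0, comm (y (s + 1)) 0 2, hb s 2]
  have h212 : 2 • ⁅⁅⁅y s, x 2⁆, x 1⁆, x 2⁆ = -B := by
    rw [← nsmul_lie, ht3'' s, neg_lie, hb s 0, comm _ 0 2, h320]
  have h410 : ⁅⁅⁅y s, x 4⁆, x 1⁆, x 0⁆ = -(2 • B) := by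
    rw [← hb s 1, ht3' (s + 1), neg_lie, nsmul_lie, hb s 2]
  have h221 : ⁅⁅⁅y s, x 2⁆, x 2⁆, x 1⁆ = 4 • B := by
    rw [ht3''' s, neg_lie, nsmul_lie, hb s 1, comm _ 0 1, h410, smul_neg, smul_smul, neg_neg]
    norm_num
  calc 8 • B = 2 • ⁅⁅⁅y s, x 2⁆, x 2⁆, x 1⁆ := by rw [h221, smul_smul]; norm_num
    _ = 2 • ⁅⁅⁅y s, x 2⁆, x 1⁆, x 2⁆ := by rw [comm _ 1 2]
    _ = -B := h212

end

/-- Remark 7.21 (case `k = 3`, `a_{ij} = −3`, rescaled): under relations (x_{1,2}), (x_d),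
(t₃'), (t₃''), (t₃'''), for every `s ≥ 1` one has
`⁅⁅⁅y s, x 1⁆, x 0⁆, x 0⁆ = 0` and `⁅⁅⁅y s, x 2⁆, x 0⁆, x 0⁆ = 0`. -/
theorem stmt_11 (K : Type*) [Field K] [CharZero K]
    (L : Type*) [LieRing L] [LieAlgebra K L]
    (x y : ℕ → L)
    (ha : ∀ a b : ℕ, ⁅x a, x b⁆ = 0)
    (hb : ∀ s r : ℕ, ⁅y (s + 1), x r⁆ = ⁅y s, x (r + 3)⁆)
    (ht3' : ∀ s : ℕ, ⁅⁅y s, x 1⁆, x 1⁆ = -(2 • ⁅⁅y s, x 2⁆, x 0⁆))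
    (ht3'' : ∀ s : ℕ, 2 • ⁅⁅y s, x 2⁆, x 1⁆ = -⁅⁅y (s + 1), x 0⁆, x 0⁆)
    (ht3''' : ∀ s : ℕ, ⁅⁅y s, x 2⁆, x 2⁆ = -(2 • ⁅⁅y (s + 1), x 1⁆, x 0⁆)) :
    ∀ s : ℕ, 1 ≤ s →
      ⁅⁅⁅y s, x 1⁆, x 0⁆, x 0⁆ = 0 ∧ ⁅⁅⁅y s, x 2⁆, x 0⁆, x 0⁆ = 0 := by
  have : IsAddTorsionFree L := .of_isTorsionFree K L
  intro s hs
  obtain ⟨t, rfl⟩ := Nat.exists_add_one_eq.mpr hs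
  rw [hb t 1, hb t 2]
  exact ⟨eq_zero_of_nsmul_eq_neg (eight_nsmul_lie_x4_x0_x0_eq_neg ha hb ht3' ht3'' ht3''' t),
    eq_zero_of_nsmul_eq_neg (eight_nsmul_lie_x5_x0_x0_eq_neg ha hb ht3' ht3'' ht3''' t)⟩
end
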